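/- There exists a circulant weighing matrix CW(196, 16); that is, there exists a vector a ∈ {0, 1, −1}^{196} such that the circulant matrix W = c(a) satisfies W Wᵀ = 16 I, where I is the 196×196 identity matrix. -/

import Mathlib

/-!
The entries of `circ a * (circ a)ᵀ` are the periodic autocorrelations of `a`, so a circulant
weighing matrix is a ternary sequence on a cyclic group whose autocorrelation vanishes off `0`.
This property is preserved by products of sequences on a product of groups, by transport along
group isomorphisms and by extension by zero along an injective homomorphism. Starting from the
circulant Hadamard matrix `CW(4, 4)` and the `CW(7, 4)` supported on the difference set
`{2, 4, 5, 6}` of `ℤ/7`, the product over `ℤ/4 × ℤ/7 ≃ ℤ/28` is a `CW(28, 16)`, and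
spreading it out along `ℤ/28 → ℤ/196, x ↦ 7x` gives a `CW(196, 16)`.
-/

open Matrix

/-- The circulant matrix `c(a)` with entries `c(a)_{i,j} = a_{(j-i) mod n}`. -/
def circ {n : ℕ} (a : Fin n → ℝ) : Matrix (Fin n) (Fin n) ℝ :=
  Matrix.of fun i j => a (j - i)

open Function

section Autocorrelation

variable {R S G H : Type*} [CommRing R] [CommRing S]
  [AddCommGroup G] [Fintype G] [AddCommGroup H] [Fintype H]

def autocorr (a : G → R) (s : G) : R := ∑ t, a t * a (t + s)

theorem autocorr_map (f : R →+* S) (a : G → R) (s : G) :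
    autocorr (f ∘ a) s = f (autocorr a s) := by
  simp [autocorr, map_sum, map_mul]

theorem autocorr_prod (a : G → R) (b : H → R) (s : G) (s' : H) :
    autocorr (fun p : G × H => a p.1 * b p.2) (s, s') = autocorr a s * autocorr b s' := by
  simp only [autocorr, Fintype.sum_prod_type, Prod.fst_add, Prod.snd_add, Finset.sum_mul_sum]
  exact Finset.sum_congr rfl fun _ _ => Finset.sum_congr rfl fun _ _ => by ring

theorem autocorr_comp_addEquiv (a : H → R) (e : G ≃+ H) (s : G) :
    autocorr (a ∘ e) s = autocorr a (e s) :=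
  Fintype.sum_equiv e.toEquiv _ _ fun t => by simp

theorem autocorr_extend_apply (a : G → R) {φ : G →+ H} (hφ : Injective φ) (s : G) :
    autocorr (extend φ a 0) (φ s) = autocorr a s := by
  refine (Fintype.sum_of_injective φ hφ _ _ (fun h hh => ?_) fun t => ?_).symm
  · rw [extend_apply' _ _ _ hh, Pi.zero_apply, zero_mul]
  · rw [← map_add, hφ.extend_apply, hφ.extend_apply]

theorem autocorr_extend_of_notMem_range (a : G → R) (φ : G →+ H) {s : H}
    (hs : s ∉ Set.range φ) : autocorr (extend φ a 0) s = 0 := by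
  refine Finset.sum_eq_zero fun h _ => ?_
  by_cases hh : h ∈ Set.range φ
  · obtain ⟨t, rfl⟩ := hh
    have : ¬∃ u, φ u = φ t + s := fun ⟨u, hu⟩ =>
      hs ⟨u - t, by rw [map_sub, hu, add_sub_cancel_left]⟩
    rw [extend_apply' _ _ _ this, Pi.zero_apply, mul_zero]
  · rw [extend_apply' _ _ _ hh, Pi.zero_apply, zero_mul]

structure IsCirculantWeighing [DecidableEq G] (a : G → R) (k : R) : Prop where
  mem : ∀ t, a t ∈ ({0, 1, -1} : Set R)
  autocorr_eq : autocorr a = Pi.single 0 k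

namespace IsCirculantWeighing

variable [DecidableEq G] [DecidableEq H] {a : G → R} {b : H → R} {k l : R}

theorem map (ha : IsCirculantWeighing a k) (f : R →+* S) :
    IsCirculantWeighing (f ∘ a) (f k) where
  mem t := by
    obtain h | h | h : a t = 0 ∨ a t = 1 ∨ a t = -1 := ha.mem t <;> simp [h]
  autocorr_eq := funext fun s => by
    rw [autocorr_map, ha.autocorr_eq, Pi.apply_single (fun _ => f) (fun _ => map_zero f)]

theorem prod (ha : IsCirculantWeighing a k) (hb : IsCirculantWeighing b l) :
    IsCirculantWeighing (fun p : G × H => a p.1 * b p.2) (k * l) where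
  mem p := by
    obtain h | h | h : a p.1 = 0 ∨ a p.1 = 1 ∨ a p.1 = -1 := ha.mem p.1 <;>
    obtain h' | h' | h' : b p.2 = 0 ∨ b p.2 = 1 ∨ b p.2 = -1 := hb.mem p.2 <;> simp [h, h']
  autocorr_eq := funext fun ⟨s, s'⟩ => by
    rw [autocorr_prod, ha.autocorr_eq, hb.autocorr_eq]
    by_cases hs : s = 0 <;> by_cases hs' : s' = 0 <;> simp [hs, hs', Pi.single_apply]

theorem comp_addEquiv (hb : IsCirculantWeighing b l) (e : G ≃+ H) :
    IsCirculantWeighing (b ∘ e) l where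
  mem t := hb.mem (e t)
  autocorr_eq := funext fun s => by
    simp [autocorr_comp_addEquiv, hb.autocorr_eq, Pi.single_apply]

theorem extend (ha : IsCirculantWeighing a k) {φ : G →+ H} (hφ : Injective φ) :
    IsCirculantWeighing (extend φ a 0) k where
  mem h := by
    by_cases hh : ∃ t, φ t = h
    · obtain ⟨t, rfl⟩ := hh
      rw [hφ.extend_apply]
      exact ha.mem t
    · simp [extend_apply' _ _ _ hh]
  autocorr_eq := funext fun s => by
    by_cases hs : s ∈ Set.range φ
    · obtain ⟨t, rfl⟩ := hs
      simp [autocorr_extend_apply _ hφ, ha.autocorr_eq, Pi.single_apply, hφ.eq_iff' (map_zero φ)]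
    · have : s ≠ 0 := fun h => hs ⟨0, by rw [map_zero, h]⟩
      simp [autocorr_extend_of_notMem_range _ _ hs, this]

end IsCirculantWeighing

end Autocorrelation

theorem circ_mul_transpose_apply {n : ℕ} [NeZero n] (a : Fin n → ℝ) (i j : Fin n) :
    (circ a * (circ a)ᵀ) i j = autocorr a (i - j) :=
  Fintype.sum_equiv (Equiv.subRight i) _ _ fun t => by
    simp [circ, sub_add_sub_cancel]

theorem IsCirculantWeighing.circ_mul_transpose {n : ℕ} [NeZero n] {a : Fin n → ℝ} {k : ℝ}
    (ha : IsCirculantWeighing a k) : circ a * (circ a)ᵀ = k • 1 := by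
  ext i j
  simp [circ_mul_transpose_apply, ha.autocorr_eq, Pi.single_apply, sub_eq_zero, one_apply]

namespace ZMod

def mulNatAddHom (n m : ℕ) : ZMod n →+ ZMod (n * m) :=
  lift n ⟨zmultiplesHom _ (m : ZMod (n * m)), by simp [← Nat.cast_mul]⟩

theorem mulNatAddHom_injective (n : ℕ) {m : ℕ} (hm : m ≠ 0) :
    Injective (mulNatAddHom n m) := by
  refine (lift_injective n).2 fun k hk => ?_
  rw [zmultiplesHom_apply, zsmul_eq_mul, ← Int.cast_natCast, ← Int.cast_mul,
    intCast_zmod_eq_zero_iff_dvd, Nat.cast_mul] at hk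
  rw [intCast_zmod_eq_zero_iff_dvd]
  exact Int.dvd_of_mul_dvd_mul_right (by exact_mod_cast hm) hk

end ZMod

def cw4 : ZMod 4 → ℤ := ![1, -1, 1, 1]
def cw7 : ZMod 7 → ℤ := ![0, 0, 1, 0, 1, 1, -1]

theorem isCirculantWeighing_cw4 : IsCirculantWeighing cw4 4 := ⟨by decide, by decide⟩
theorem isCirculantWeighing_cw7 : IsCirculantWeighing cw7 4 := ⟨by decide, by decide⟩

/-- There exists a circulant weighing matrix `CW(196, 16)`. -/
theorem exists_CW_196_16 :
    ∃ a : Fin 196 → ℝ, (∀ s, a s ∈ ({0, 1, -1} : Set ℝ)) ∧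
      circ a * (circ a)ᵀ = (16 : ℝ) • (1 : Matrix (Fin 196) (Fin 196) ℝ) := by
  have h28 := (isCirculantWeighing_cw4.prod isCirculantWeighing_cw7).comp_addEquiv
    (ZMod.chineseRemainder (by norm_num : Nat.Coprime 4 7)).toAddEquiv
  have h196 := (h28.extend (ZMod.mulNatAddHom_injective 28 (by norm_num : 7 ≠ 0))).map
    (Int.castRingHom ℝ)
  -- `ZMod 196` is `Fin 196` by definition, with the same additive structure.
  exact ⟨_, h196.mem, by simpa using h196.circ_mul_transpose⟩
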